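/- Let I₁, I₂ be nonzero proper ideals of commutative rings R₁, R₂ respectively. Then I₁ × I₂ is an sdf-absorbing ideal of R₁ × R₂ if and only if I₁ and I₂ are sdf-absorbing ideals of R₁ and R₂ respectively, and 2 ∈ I₁ or 2 ∈ I₂. -/

import Mathlib

/-!
For a nonzero sdf-absorbing ideal `I`, the conclusion `a + b ∈ I ∨ a - b ∈ I` also holds when `a`
or `b` is zero: comparing `x ^ 2` with `c ^ 2` for some nonzero `c ∈ I` shows that `I` contains
every `x` with `x ^ 2 ∈ I`. Hence `I₁ × I₂` absorbs componentwise, except that the two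
components may pick different signs; the sign is irrelevant in a component containing `2`,
since then `a + b` and `a - b` differ by an element of the ideal. Conversely, testing
`I₁ × I₂` on `(a, 1), (b, 1)` and `(1, a), (1, b)` recovers `I₁` and `I₂`, and on `(1, 1), (1, -1)`
it forces `2 ∈ I₁` or `2 ∈ I₂`.
-/

/-- A proper ideal `I` is sdf-absorbing if whenever `a^2 - b^2 ∈ I` for nonzero
`a, b`, then `a + b ∈ I` or `a - b ∈ I`. -/
def IsSdfAbsorbing {R : Type*} [CommRing R] (I : Ideal R) : Prop :=
  I ≠ ⊤ ∧ ∀ a b : R, a ≠ 0 → b ≠ 0 → a ^ 2 - b ^ 2 ∈ I → a + b ∈ I ∨ a - b ∈ I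

namespace IsSdfAbsorbing

variable {R : Type*} [CommRing R] {I : Ideal R}

theorem mem_of_sq_mem (hI : IsSdfAbsorbing I) (h0 : I ≠ ⊥) {x : R} (hx : x ≠ 0)
    (hx2 : x ^ 2 ∈ I) : x ∈ I := by
  obtain ⟨c, hc, hc0⟩ := Submodule.exists_mem_ne_zero_of_ne_bot h0
  have hc2 : c ^ 2 ∈ I := by simpa [sq] using I.mul_mem_left c hc
  rcases hI.2 x c hx hc0 (I.sub_mem hx2 hc2) with h | h
  · simpa using I.sub_mem h hc
  · simpa using I.add_mem h hc

theorem add_mem_or_sub_mem (hI : IsSdfAbsorbing I) (h0 : I ≠ ⊥) {a b : R}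
    (hab : a ^ 2 - b ^ 2 ∈ I) : a + b ∈ I ∨ a - b ∈ I := by
  rcases eq_or_ne a 0 with rfl | ha
  · rcases eq_or_ne b 0 with rfl | hb
    · simp
    · left
      simpa using hI.mem_of_sq_mem h0 hb (by simpa using I.neg_mem hab)
  · rcases eq_or_ne b 0 with rfl | hb
    · left
      simpa using hI.mem_of_sq_mem h0 ha (by simpa using hab)
    · exact hI.2 a b ha hb hab

end IsSdfAbsorbing

theorem Ideal.add_mem_iff_sub_mem_of_two_mem {R : Type*} [CommRing R] {I : Ideal R}
    (h2 : (2 : R) ∈ I) (a b : R) : a + b ∈ I ↔ a - b ∈ I := by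
  have h2b : b * 2 ∈ I := I.mul_mem_left b h2
  constructor
  · intro h
    simpa [mul_two] using I.sub_mem h h2b
  · intro h
    convert I.add_mem h h2b using 1
    ring

section Prod

variable {R₁ R₂ : Type*} [CommRing R₁] [CommRing R₂] {I₁ : Ideal R₁} {I₂ : Ideal R₂}

theorem IsSdfAbsorbing.of_prod_left (h : IsSdfAbsorbing (I₁.prod I₂)) (h₁t : I₁ ≠ ⊤) :
    IsSdfAbsorbing I₁ := by
  refine ⟨h₁t, fun a b ha hb hab => ?_⟩
  have key := h.2 (a, 1) (b, 1) (by simp [ha]) (by simp [hb]) (by simp [Ideal.mem_prod, hab])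
  rw [Ideal.mem_prod, Ideal.mem_prod] at key
  exact key.imp And.left And.left

theorem IsSdfAbsorbing.of_prod_right (h : IsSdfAbsorbing (I₁.prod I₂)) (h₂t : I₂ ≠ ⊤) :
    IsSdfAbsorbing I₂ := by
  refine ⟨h₂t, fun a b ha hb hab => ?_⟩
  have key := h.2 (1, a) (1, b) (by simp [ha]) (by simp [hb]) (by simp [Ideal.mem_prod, hab])
  rw [Ideal.mem_prod, Ideal.mem_prod] at key
  exact key.imp And.right And.right

theorem IsSdfAbsorbing.two_mem_of_prod (h : IsSdfAbsorbing (I₁.prod I₂)) :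
    (2 : R₁) ∈ I₁ ∨ (2 : R₂) ∈ I₂ := by
  have h10 : (1 : R₁ × R₂) ≠ 0 := fun h10 =>
    h.1 ((Ideal.eq_top_iff_one _).2 (h10 ▸ Ideal.zero_mem _))
  have : Nontrivial (R₁ × R₂) := nontrivial_of_ne 1 0 h10
  have hunit : IsUnit ((1, -1) : R₁ × R₂) := IsUnit.of_mul_eq_one ((1, -1) : R₁ × R₂) (by simp)
  have key := h.2 1 (1, -1) h10 hunit.ne_zero (by simp [Ideal.mem_prod])
  rcases key with h2 | h2
  · left
    simpa [Ideal.mem_prod, one_add_one_eq_two] using h2.1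
  · right
    simpa [Ideal.mem_prod, one_add_one_eq_two] using h2.2

theorem isSdfAbsorbing_prod (h₁ : IsSdfAbsorbing I₁) (h₂ : IsSdfAbsorbing I₂) (h₁0 : I₁ ≠ ⊥)
    (h₂0 : I₂ ≠ ⊥) (h2 : (2 : R₁) ∈ I₁ ∨ (2 : R₂) ∈ I₂) : IsSdfAbsorbing (I₁.prod I₂) := by
  refine ⟨fun htop => h₁.1 (Ideal.prod_eq_top_iff.mp htop).1, fun a b _ _ hab => ?_⟩
  simp only [Ideal.mem_prod, Prod.fst_sub, Prod.snd_sub, Prod.fst_add, Prod.snd_add,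
    Prod.pow_fst, Prod.pow_snd] at hab ⊢
  have hc₁ := h₁.add_mem_or_sub_mem h₁0 hab.1
  have hc₂ := h₂.add_mem_or_sub_mem h₂0 hab.2
  have hflip := h2.imp (Ideal.add_mem_iff_sub_mem_of_two_mem · a.1 b.1)
    (Ideal.add_mem_iff_sub_mem_of_two_mem · a.2 b.2)
  tauto

end Prod

theorem stmt17_general {R₁ R₂ : Type*} [CommRing R₁] [CommRing R₂]
    (I₁ : Ideal R₁) (I₂ : Ideal R₂) (h₁0 : I₁ ≠ ⊥) (h₁t : I₁ ≠ ⊤)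
    (h₂0 : I₂ ≠ ⊥) (h₂t : I₂ ≠ ⊤) :
    IsSdfAbsorbing (I₁.prod I₂) ↔
      IsSdfAbsorbing I₁ ∧ IsSdfAbsorbing I₂ ∧ ((2 : R₁) ∈ I₁ ∨ (2 : R₂) ∈ I₂) :=
  ⟨fun h => ⟨h.of_prod_left h₁t, h.of_prod_right h₂t, h.two_mem_of_prod⟩,
    fun ⟨h₁, h₂, h2⟩ => isSdfAbsorbing_prod h₁ h₂ h₁0 h₂0 h2⟩

theorem stmt17 {R₁ R₂ : Type*} [CommRing R₁] [CommRing R₂] [Nontrivial R₁] [Nontrivial R₂]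
    (I₁ : Ideal R₁) (I₂ : Ideal R₂) (h₁0 : I₁ ≠ ⊥) (h₁t : I₁ ≠ ⊤)
    (h₂0 : I₂ ≠ ⊥) (h₂t : I₂ ≠ ⊤) :
    IsSdfAbsorbing (I₁.prod I₂) ↔
      IsSdfAbsorbing I₁ ∧ IsSdfAbsorbing I₂ ∧ ((2 : R₁) ∈ I₁ ∨ (2 : R₂) ∈ I₂) :=
  stmt17_general I₁ I₂ h₁0 h₁t h₂0 h₂t
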